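/- arXiv:2307.08896 — 2 statements merged into one kernel-verified Lean document; each statement's English description precedes it below -/
import Mathlib

section
/- If A₁ and A₂ are bounded operators on a Hilbert space with A₁ positive semidefinite, then the operator norm of the commutator satisfies ‖A₁A₂ - A₂A₁‖ ≤ ‖A₁‖·‖A₂‖. -/
/-!
Shifting `A₁` by a scalar does not change the commutator, and since the spectrum of `A₁` lies in
`[0, ‖A₁‖]`, the self-adjoint operator `A₁ - ‖A₁‖/2` has norm at most `‖A₁‖/2`. The trivial bound
`‖[B, A₂]‖ ≤ 2‖B‖‖A₂‖` applied to this shift gives the claim.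
-/

theorem lie_sub_algebraMap_left {R A : Type*} [CommRing R] [Ring A] [Algebra R A]
    (a b : A) (r : R) : ⁅a - algebraMap R A r, b⁆ = ⁅a, b⁆ := by
  simp only [Ring.lie_def, sub_mul, mul_sub, Algebra.commutes r b]
  abel

theorem norm_lie_le {A : Type*} [NonUnitalNormedRing A] (a b : A) :
    ‖⁅a, b⁆‖ ≤ 2 * ‖a‖ * ‖b‖ :=
  calc ‖⁅a, b⁆‖ ≤ ‖a * b‖ + ‖b * a‖ := by rw [Ring.lie_def]; exact norm_sub_le _ _
    _ ≤ ‖a‖ * ‖b‖ + ‖b‖ * ‖a‖ := add_le_add (norm_mul_le a b) (norm_mul_le b a)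
    _ = 2 * ‖a‖ * ‖b‖ := by ring

theorem CStarAlgebra.norm_sub_algebraMap_half_norm_le {A : Type*} [CStarAlgebra A]
    [PartialOrder A] [StarOrderedRing A] {a : A} (ha : 0 ≤ a) :
    ‖a - algebraMap ℝ A (‖a‖ / 2)‖ ≤ ‖a‖ / 2 := by
  have ha_sa : IsSelfAdjoint a := .of_nonneg ha
  have hσ_le : ∀ x ∈ spectrum ℝ a, x ≤ ‖a‖ :=
    (le_algebraMap_iff_spectrum_le ha_sa).mp ha_sa.le_algebraMap_norm_self
  have h_cfc : a - algebraMap ℝ A (‖a‖ / 2) = cfc (fun x : ℝ ↦ x - ‖a‖ / 2) a := by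
    rw [cfc_sub _ _, cfc_id' ℝ a, cfc_const _ a]
  rw [h_cfc]
  refine norm_cfc_le (by positivity) fun x hx ↦ ?_
  rw [Real.norm_eq_abs, abs_le]
  have hx_nonneg := spectrum_nonneg_of_nonneg ha hx
  constructor <;> linarith [hσ_le x hx]

/-- If `A₁` and `A₂` are bounded operators on a complex Hilbert space with `A₁`
positive semidefinite, then `‖A₁A₂ - A₂A₁‖ ≤ ‖A₁‖·‖A₂‖`. -/
theorem commutator_norm_le_of_isPositive
    {E : Type*} [NormedAddCommGroup E] [InnerProductSpace ℂ E] [CompleteSpace E]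
    (A₁ A₂ : E →L[ℂ] E) (hA₁ : A₁.IsPositive) :
    ‖A₁ * A₂ - A₂ * A₁‖ ≤ ‖A₁‖ * ‖A₂‖ := by
  have h_shift := CStarAlgebra.norm_sub_algebraMap_half_norm_le
    ((ContinuousLinearMap.nonneg_iff_isPositive A₁).mpr hA₁)
  calc ‖A₁ * A₂ - A₂ * A₁‖ = ‖⁅A₁ - algebraMap ℝ _ (‖A₁‖ / 2), A₂⁆‖ := by
        rw [lie_sub_algebraMap_left, Ring.lie_def]
    _ ≤ 2 * (‖A₁‖ / 2) * ‖A₂‖ := by grw [norm_lie_le, h_shift]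
    _ = ‖A₁‖ * ‖A₂‖ := by ring
end

section
/- For an exponentially localized operator A with rate κ and prefactor C on ℓ²(ℤ⁺ × Fin D), for every x ∈ ℝ and every g with 0 ≤ g ≤ κ/2, the conjugated-minus-original operator satisfies ‖B_{g,x} A B_{g,x}^{-1} - A‖ ≤ 8CDg/κ². -/
noncomputable section

/-- The index set `ℤ⁺ × {1,…,D}`. -/
abbrev Idx (D : ℕ) := ℕ+ × Fin D

/-- The Hilbert space `ℓ²(ℤ⁺ × Fin D)` of square-summable complex sequences. -/
abbrev Ell2 (D : ℕ) := lp (fun _ : Idx D => ℂ) 2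

/-- The standard orthonormal basis vector `|j,m⟩`. -/
def ket {D : ℕ} (i : Idx D) : Ell2 D := lp.single 2 i (1 : ℂ)

/-- The matrix entry `⟨j,m| T |j',m'⟩`. -/
def entry {D : ℕ} (T : Ell2 D →L[ℂ] Ell2 D) (i i' : Idx D) : ℂ :=
  inner (𝕜 := ℂ) (ket i) (T (ket i'))

/-!
Writing `d = |j - j'|`, the tilt exponent `g|j - x| - g|j' - x|` has absolute value at most `g d`,
so `|e^u - 1| ≤ |u| e^{|u|}` bounds the entries of `B A B⁻¹ - A` by `C g d e^{-(κ - g) d}`.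
Since `∑ₙ n e^{-an} = e^{-a} / (1 - e^{-a})² ≤ a⁻²` (this is `a ≤ 2 sinh (a/2)`), every row and
column sum of these bounds is at most `2CDg / (κ - g)² ≤ 8CDg / κ²`. Schur's test, i.e. the
weighted Cauchy–Schwarz inequality `(∑ⱼ mᵢⱼ aⱼ)² ≤ (∑ⱼ mᵢⱼ)(∑ⱼ mᵢⱼ aⱼ²)` summed over `i`, turns
this into the operator and its norm bound.
-/

open scoped ENNReal NNReal lp
open Real

namespace ENNReal

variable {ι : Type*}

theorem tsum_mul_sq_le (w f : ι → ℝ≥0∞) :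
    (∑' i, w i * f i) ^ 2 ≤ (∑' i, w i) * ∑' i, w i * f i ^ 2 := by
  have hfin (s : Finset ι) : ∑ i ∈ s, w i * f i ≤
      (∑' i, w i) ^ (2⁻¹ : ℝ) * (∑' i, w i * f i ^ 2) ^ (2⁻¹ : ℝ) := by
    have h := inner_le_weight_mul_Lp_of_nonneg s (p := 2) one_le_two w f
    rw [show (1 : ℝ) - 2⁻¹ = 2⁻¹ by norm_num] at h
    simp only [ENNReal.rpow_two] at h
    refine h.trans ?_
    gcongr <;> exact ENNReal.sum_le_tsum s
  calc (∑' i, w i * f i) ^ 2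
      ≤ ((∑' i, w i) ^ (2⁻¹ : ℝ) * (∑' i, w i * f i ^ 2) ^ (2⁻¹ : ℝ)) ^ 2 := by
        gcongr
        exact ENNReal.summable.tsum_le_of_sum_le hfin
    _ = (∑' i, w i) * ∑' i, w i * f i ^ 2 := by
        rw [mul_pow, ← ENNReal.rpow_two, ← ENNReal.rpow_two, ← ENNReal.rpow_mul,
          ← ENNReal.rpow_mul]
        norm_num

theorem tsum_sq_tsum_mul_le (m : ι → ι → ℝ≥0∞) (a : ι → ℝ≥0∞) {K : ℝ≥0∞}
    (hrow : ∀ i, ∑' j, m i j ≤ K) (hcol : ∀ j, ∑' i, m i j ≤ K) :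
    ∑' i, (∑' j, m i j * a j) ^ 2 ≤ K ^ 2 * ∑' j, a j ^ 2 :=
  calc ∑' i, (∑' j, m i j * a j) ^ 2
      ≤ ∑' i, K * ∑' j, m i j * a j ^ 2 :=
        ENNReal.tsum_le_tsum fun i => (tsum_mul_sq_le _ _).trans (by gcongr; exact hrow i)
    _ = K * ∑' j, (∑' i, m i j) * a j ^ 2 := by
        rw [ENNReal.tsum_mul_left, ENNReal.tsum_comm]
        simp_rw [ENNReal.tsum_mul_right]
    _ ≤ K * ∑' j, K * a j ^ 2 := by gcongr with j; exact hcol j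
    _ = K ^ 2 * ∑' j, a j ^ 2 := by rw [ENNReal.tsum_mul_left, ← mul_assoc, sq]

theorem tsum_int_natAbs_le (F : ℕ → ℝ≥0∞) : ∑' n : ℤ, F n.natAbs ≤ 2 * ∑' n, F n := by
  rw [tsum_of_nat_of_neg_add_one ENNReal.summable ENNReal.summable, two_mul]
  refine add_le_add (by simp) ?_
  calc ∑' n : ℕ, F (-(n + 1 : ℤ)).natAbs = ∑' n : ℕ, F (n + 1) := by
        congr with n
    _ ≤ ∑' n, F n := ENNReal.tsum_comp_le_tsum_of_injective (add_left_injective 1) F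

theorem tsum_prod_comp_fst {α β : Type*} [Fintype β] (f : α → ℝ≥0∞) :
    ∑' p : α × β, f p.1 = Fintype.card β * ∑' a, f a := by
  rw [ENNReal.tsum_prod (f := fun a (_ : β) => f a), ← ENNReal.tsum_mul_left]
  simp

end ENNReal

namespace lp

variable {ι : Type*} {E : ι → Type*} [∀ i, NormedAddCommGroup (E i)]

theorem tsum_enorm_sq_le (f : lp E 2) : ∑' i, ‖f i‖ₑ ^ 2 ≤ ‖f‖ₑ ^ 2 := by
  refine ENNReal.summable.tsum_le_of_sum_le fun s => ?_
  have h := sum_rpow_le_norm_rpow (p := 2) (by norm_num) f s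
  simp only [ENNReal.toReal_ofNat, Real.rpow_two] at h
  simp only [enorm_eq_nnnorm, ← ENNReal.coe_pow, ← ENNReal.ofNNReal_finsetSum,
    ENNReal.coe_le_coe, ← NNReal.coe_le_coe]
  push_cast
  exact h

theorem sum_norm_rpow_le_of_tsum_enorm_sq_le {g : ∀ i, E i} {c : ℝ≥0}
    (h : ∑' i, ‖g i‖ₑ ^ 2 ≤ (c : ℝ≥0∞) ^ 2) (s : Finset ι) :
    ∑ i ∈ s, ‖g i‖ ^ (2 : ℝ≥0∞).toReal ≤ (c : ℝ) ^ (2 : ℝ≥0∞).toReal := by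
  have h' := (ENNReal.sum_le_tsum s).trans h
  simp only [enorm_eq_nnnorm, ← ENNReal.coe_pow, ← ENNReal.ofNNReal_finsetSum,
    ENNReal.coe_le_coe, ← NNReal.coe_le_coe] at h'
  push_cast at h'
  simpa only [ENNReal.toReal_ofNat, Real.rpow_two] using h'

end lp

section SchurTest

variable {ι 𝕜 : Type*} [NontriviallyNormedField 𝕜] {M : ι → ι → 𝕜} {K : ℝ≥0}

theorem summable_mul_apply_of_tsum_enorm_le [CompleteSpace 𝕜] {i : ι}
    (hrow : ∑' j, ‖M i j‖ₑ ≤ K) (f : ℓ²(ι, 𝕜)) : Summable fun j => M i j * f j := by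
  refine Summable.of_enorm (ne_top_of_le_ne_top (b := K * ‖f‖ₑ) (by finiteness) ?_)
  calc ∑' j, ‖M i j * f j‖ₑ ≤ ∑' j, ‖M i j‖ₑ * ‖f‖ₑ := by
        simp only [enorm_mul]
        gcongr with j
        exact ENNReal.coe_le_coe.2 (lp.norm_apply_le_norm two_ne_zero f j)
    _ ≤ K * ‖f‖ₑ := by rw [ENNReal.tsum_mul_right]; gcongr

theorem tsum_enorm_tsum_mul_sq_le (hrow : ∀ i, ∑' j, ‖M i j‖ₑ ≤ K)
    (hcol : ∀ j, ∑' i, ‖M i j‖ₑ ≤ K) (f : ℓ²(ι, 𝕜)) :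
    ∑' i, ‖∑' j, M i j * f j‖ₑ ^ 2 ≤ ((K * ‖f‖₊ : ℝ≥0) : ℝ≥0∞) ^ 2 :=
  calc ∑' i, ‖∑' j, M i j * f j‖ₑ ^ 2
      ≤ ∑' i, (∑' j, ‖M i j‖ₑ * ‖f j‖ₑ) ^ 2 := by
        gcongr with i
        simpa only [enorm_mul] using enorm_tsum_le_tsum_enorm (f := fun j => M i j * f j)
    _ ≤ (K : ℝ≥0∞) ^ 2 * ∑' j, ‖f j‖ₑ ^ 2 := ENNReal.tsum_sq_tsum_mul_le _ _ hrow hcol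
    _ ≤ (K : ℝ≥0∞) ^ 2 * ‖f‖ₑ ^ 2 := by gcongr; exact lp.tsum_enorm_sq_le f
    _ = ((K * ‖f‖₊ : ℝ≥0) : ℝ≥0∞) ^ 2 := by rw [← mul_pow, enorm_eq_nnnorm, ENNReal.coe_mul]

theorem memℓp_tsum_mul (hrow : ∀ i, ∑' j, ‖M i j‖ₑ ≤ K)
    (hcol : ∀ j, ∑' i, ‖M i j‖ₑ ≤ K) (f : ℓ²(ι, 𝕜)) :
    Memℓp (fun i => ∑' j, M i j * f j) 2 :=
  memℓp_gen' (lp.sum_norm_rpow_le_of_tsum_enorm_sq_le (tsum_enorm_tsum_mul_sq_le hrow hcol f))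

def schurOp [CompleteSpace 𝕜] (hrow : ∀ i, ∑' j, ‖M i j‖ₑ ≤ K)
    (hcol : ∀ j, ∑' i, ‖M i j‖ₑ ≤ K) :
    ℓ²(ι, 𝕜) →L[𝕜] ℓ²(ι, 𝕜) :=
  LinearMap.mkContinuous
    { toFun f := ⟨fun i => ∑' j, M i j * f j, memℓp_tsum_mul hrow hcol f⟩
      map_add' f f' := by
        ext i
        simp only [lp.coeFn_add, Pi.add_apply, mul_add]
        exact (summable_mul_apply_of_tsum_enorm_le (hrow i) f).tsum_add
          (summable_mul_apply_of_tsum_enorm_le (hrow i) f')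
      map_smul' c f := by
        ext i
        simp only [lp.coeFn_smul, Pi.smul_apply, smul_eq_mul, RingHom.id_apply, mul_left_comm _ c]
        exact tsum_mul_left }
    K fun f => lp.norm_le_of_forall_sum_le (by norm_num) (by positivity) <| by
      exact_mod_cast lp.sum_norm_rpow_le_of_tsum_enorm_sq_le (tsum_enorm_tsum_mul_sq_le hrow hcol f)

theorem schurOp_apply [CompleteSpace 𝕜] (hrow : ∀ i, ∑' j, ‖M i j‖ₑ ≤ K)
    (hcol : ∀ j, ∑' i, ‖M i j‖ₑ ≤ K) (f : ℓ²(ι, 𝕜)) (i : ι) :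
    schurOp hrow hcol f i = ∑' j, M i j * f j :=
  rfl

theorem norm_schurOp_le [CompleteSpace 𝕜] (hrow : ∀ i, ∑' j, ‖M i j‖ₑ ≤ K)
    (hcol : ∀ j, ∑' i, ‖M i j‖ₑ ≤ K) :
    ‖schurOp hrow hcol‖ ≤ K :=
  LinearMap.mkContinuous_norm_le _ K.2 _

theorem schurOp_single_apply [CompleteSpace 𝕜] [DecidableEq ι] (hrow : ∀ i, ∑' j, ‖M i j‖ₑ ≤ K)
    (hcol : ∀ j, ∑' i, ‖M i j‖ₑ ≤ K) (i j : ι) :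
    schurOp hrow hcol (lp.single 2 j 1) i = M i j := by
  rw [schurOp_apply, tsum_eq_single j fun j' hj' => by simp [Pi.single_eq_of_ne hj'],
    lp.single_apply_self, mul_one]

end SchurTest

namespace Real

theorem abs_exp_sub_one_le_abs_mul_exp_abs (u : ℝ) : |exp u - 1| ≤ |u| * exp |u| := by
  rcases le_total 0 u with hu | hu
  · have h : 1 - u ≤ exp (-u) := by linarith [add_one_le_exp (-u)]
    have h' : exp (-u) * exp u = 1 := by rw [← exp_add, neg_add_cancel, exp_zero]
    rw [abs_of_nonneg (by linarith [one_le_exp hu]), abs_of_nonneg hu]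
    nlinarith [exp_pos u]
  · rw [abs_of_nonpos (by linarith [exp_le_one_iff.2 hu]), abs_of_nonpos hu]
    nlinarith [add_one_le_exp u, one_le_exp (neg_nonneg.2 hu)]

theorem abs_exp_mul_exp_neg_sub_one_le {g : ℝ} (hg : 0 ≤ g) (s t x : ℝ) :
    |exp (g * |s - x|) * exp (-(g * |t - x|)) - 1| ≤ g * |s - t| * exp (g * |s - t|) := by
  have hu : |g * |s - x| + -(g * |t - x|)| ≤ g * |s - t| := by
    rw [← sub_eq_add_neg, ← mul_sub, abs_mul, abs_of_nonneg hg]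
    refine mul_le_mul_of_nonneg_left ?_ hg
    simpa using abs_abs_sub_abs_le_abs_sub (s - x) (t - x)
  rw [← exp_add]
  exact (abs_exp_sub_one_le_abs_mul_exp_abs _).trans
    (mul_le_mul hu (exp_le_exp.2 hu) (exp_pos _).le (by positivity))

theorem mul_exp_neg_half_le_one_sub_exp_neg {a : ℝ} (ha : 0 ≤ a) :
    a * exp (-(a / 2)) ≤ 1 - exp (-a) := by
  have hsinh : a ≤ 2 * sinh (a / 2) := by
    linarith [self_le_sinh_iff.2 (by positivity : 0 ≤ a / 2)]
  have hfactor : 1 - exp (-a) = exp (-(a / 2)) * (2 * sinh (a / 2)) := by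
    rw [sinh_eq, mul_div_cancel₀ _ two_ne_zero, mul_sub, ← exp_add, ← exp_add, neg_add_cancel,
      exp_zero, ← neg_add, add_halves]
  rw [hfactor, mul_comm a]
  gcongr

theorem hasSum_nat_mul_exp_neg {a : ℝ} (ha : 0 < a) :
    HasSum (fun n : ℕ => n * exp (-a * n)) (exp (-a) / (1 - exp (-a)) ^ 2) := by
  have hr : ‖exp (-a)‖ < 1 := by
    rw [norm_of_nonneg (exp_pos _).le, exp_lt_one_iff]
    linarith
  simp_rw [mul_comm (-a), exp_nat_mul]
  exact hasSum_coe_mul_geometric_of_norm_lt_one hr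

theorem exp_neg_div_one_sub_exp_neg_sq_le {a : ℝ} (ha : 0 < a) :
    exp (-a) / (1 - exp (-a)) ^ 2 ≤ 1 / a ^ 2 := by
  have hsq : exp (-a) = exp (-(a / 2)) ^ 2 := by rw [← exp_nat_mul]; ring_nf
  have h := mul_exp_neg_half_le_one_sub_exp_neg ha.le
  have hpos : 0 < 1 - exp (-a) := lt_of_lt_of_le (by positivity) h
  rw [div_le_div_iff₀ (by positivity) (by positivity), one_mul, hsq]
  nlinarith [pow_le_pow_left₀ (by positivity) h 2]

end Real

def distWeight (a : ℝ) (j j' : ℕ+) : ℝ :=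
  |((j : ℕ) : ℝ) - ((j' : ℕ) : ℝ)| * exp (-a * |((j : ℕ) : ℝ) - ((j' : ℕ) : ℝ)|)

theorem distWeight_comm (a : ℝ) (j j' : ℕ+) : distWeight a j j' = distWeight a j' j := by
  simp only [distWeight, abs_sub_comm]

theorem tsum_ofReal_distWeight_le {a : ℝ} (ha : 0 < a) (j : ℕ+) :
    ∑' j', ENNReal.ofReal (distWeight a j j') ≤ ENNReal.ofReal (2 / a ^ 2) := by
  set F : ℕ → ℝ≥0∞ := fun n => ENNReal.ofReal (n * exp (-a * n))
  have hdist (j' : ℕ+) : |((j : ℕ) : ℝ) - ((j' : ℕ) : ℝ)| = (((j' : ℤ) - j).natAbs : ℝ) := by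
    rw [Nat.cast_natAbs, Int.cast_abs, abs_sub_comm]
    push_cast
    rfl
  have hF : ∑' n, F n = ENNReal.ofReal (exp (-a) / (1 - exp (-a)) ^ 2) := by
    rw [← (hasSum_nat_mul_exp_neg ha).tsum_eq,
      ENNReal.ofReal_tsum_of_nonneg (fun n => by positivity) (hasSum_nat_mul_exp_neg ha).summable]
  calc ∑' j', ENNReal.ofReal (distWeight a j j')
      = ∑' j' : ℕ+, F ((j' : ℤ) - j).natAbs := by simp only [distWeight, hdist, F]
    _ ≤ ∑' n : ℤ, F n.natAbs :=
        ENNReal.tsum_comp_le_tsum_of_injective (fun _ _ h => by simpa using h) (F ∘ Int.natAbs)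
    _ ≤ 2 * ∑' n, F n := ENNReal.tsum_int_natAbs_le F
    _ ≤ 2 * ENNReal.ofReal (1 / a ^ 2) := by
        rw [hF]
        exact mul_le_mul_right (ENNReal.ofReal_le_ofReal (exp_neg_div_one_sub_exp_neg_sq_le ha)) _
    _ = ENNReal.ofReal (2 / a ^ 2) := by
        rw [← ENNReal.ofReal_ofNat 2, ← ENNReal.ofReal_mul zero_le_two, mul_one_div]

theorem entry_eq_apply_ket {D : ℕ} (T : Ell2 D →L[ℂ] Ell2 D) (i i' : Idx D) :
    entry T i i' = T (ket i') i := by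
  simp [entry, ket, lp.inner_single_left]

theorem norm_ofReal_exp_tilt_sub_one_mul_le {C κ g : ℝ} (hg : 0 ≤ g) {s t x : ℝ} {z : ℂ}
    (hz : ‖z‖ ≤ C * exp (-κ * |s - t|)) :
    ‖((exp (g * |s - x|) * exp (-(g * |t - x|)) - 1 : ℝ) : ℂ) * z‖ ≤
      C * g * (|s - t| * exp (-(κ - g) * |s - t|)) :=
  calc ‖((exp (g * |s - x|) * exp (-(g * |t - x|)) - 1 : ℝ) : ℂ) * z‖
      ≤ g * |s - t| * exp (g * |s - t|) * (C * exp (-κ * |s - t|)) := by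
        rw [norm_mul, Complex.norm_real, norm_eq_abs]
        exact mul_le_mul (abs_exp_mul_exp_neg_sub_one_le hg s t x) hz (norm_nonneg z)
          (by positivity)
    _ = C * g * (|s - t| * exp (-(κ - g) * |s - t|)) := by
        rw [show -(κ - g) * |s - t| = g * |s - t| + -κ * |s - t| by ring, exp_add]
        ring

theorem tsum_idx_ofReal_distWeight_le (D : ℕ) {C κ g : ℝ} (hC : 0 ≤ C) (hκ : 0 < κ)
    (hg0 : 0 ≤ g) (hg : g ≤ κ / 2) (j : ℕ+) :
    ∑' i : Idx D, ENNReal.ofReal (C * g * distWeight (κ - g) j i.1) ≤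
      ENNReal.ofReal (8 * C * D * g / κ ^ 2) := by
  have ha : 0 < κ - g := by linarith
  have hκa : 2 / (κ - g) ^ 2 ≤ 8 / κ ^ 2 := by
    rw [div_le_div_iff₀ (by positivity) (by positivity)]
    nlinarith
  calc ∑' i : Idx D, ENNReal.ofReal (C * g * distWeight (κ - g) j i.1)
      = D * ∑' j', ENNReal.ofReal (C * g * distWeight (κ - g) j j') := by
        simpa using ENNReal.tsum_prod_comp_fst (β := Fin D)
          fun j' => ENNReal.ofReal (C * g * distWeight (κ - g) j j')
    _ ≤ D * ENNReal.ofReal (C * g * (2 / (κ - g) ^ 2)) := by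
        simp_rw [ENNReal.ofReal_mul (mul_nonneg hC hg0), ENNReal.tsum_mul_left]
        gcongr
        exact tsum_ofReal_distWeight_le ha j
    _ = ENNReal.ofReal (D * (C * g * (2 / (κ - g) ^ 2))) := by
        rw [ENNReal.ofReal_mul (Nat.cast_nonneg (α := ℝ) D), ENNReal.ofReal_natCast]
    _ ≤ ENNReal.ofReal (8 * C * D * g / κ ^ 2) := by
        refine ENNReal.ofReal_le_ofReal ?_
        calc D * (C * g * (2 / (κ - g) ^ 2)) ≤ D * (C * g * (8 / κ ^ 2)) := by gcongr
          _ = 8 * C * D * g / κ ^ 2 := by ring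

/-- For an exponentially localized operator `A` (rate `κ`, prefactor `C`), every
`x ∈ ℝ` and `0 ≤ g ≤ κ/2`, the operator `B_{g,x} A B_{g,x}⁻¹ - A`, whose matrix
entries are `(e^{g|j-x|} e^{-g|j'-x|} - 1)·⟨j,m|A|j',m'⟩`, is bounded with norm at
most `8CDg/κ²`. -/
theorem tilted_conjugation_estimate (D : ℕ) (C κ : ℝ) (hC : 0 < C) (hκ : 0 < κ)
    (A : Ell2 D →L[ℂ] Ell2 D)
    (hA : ∀ i i' : Idx D,
      ‖entry A i i'‖ ≤ C * Real.exp (-κ * |((i.1 : ℕ) : ℝ) - ((i'.1 : ℕ) : ℝ)|))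
    (x g : ℝ) (hg0 : 0 ≤ g) (hg : g ≤ κ / 2) :
    ∃ T : Ell2 D →L[ℂ] Ell2 D,
      (∀ i i' : Idx D, entry T i i' =
        (↑(Real.exp (g * |((i.1 : ℕ) : ℝ) - x|) * Real.exp (-(g * |((i'.1 : ℕ) : ℝ) - x|)) - 1)
          : ℂ) * entry A i i') ∧
      ‖T‖ ≤ 8 * C * D * g / κ ^ 2 := by
  set M : Idx D → Idx D → ℂ := fun i i' =>
    (↑(Real.exp (g * |((i.1 : ℕ) : ℝ) - x|) * Real.exp (-(g * |((i'.1 : ℕ) : ℝ) - x|)) - 1)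
      : ℂ) * entry A i i'
  have hM (i i' : Idx D) :
      ‖M i i'‖ₑ ≤ ENNReal.ofReal (C * g * distWeight (κ - g) i.1 i'.1) := by
    rw [← ofReal_norm]
    exact ENNReal.ofReal_le_ofReal (norm_ofReal_exp_tilt_sub_one_mul_le hg0 (hA i i'))
  have hsum := tsum_idx_ofReal_distWeight_le D hC.le hκ hg0 hg
  have hrow (i : Idx D) : ∑' i', ‖M i i'‖ₑ ≤ (8 * C * D * g / κ ^ 2).toNNReal :=
    (ENNReal.tsum_le_tsum (hM i)).trans (hsum i.1)
  have hcol (i' : Idx D) : ∑' i, ‖M i i'‖ₑ ≤ (8 * C * D * g / κ ^ 2).toNNReal :=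
    (ENNReal.tsum_le_tsum fun i => (hM i i').trans_eq (by rw [distWeight_comm])).trans
      (hsum i'.1)
  refine ⟨schurOp hrow hcol, fun i i' => ?_, ?_⟩
  · rw [entry_eq_apply_ket, ket, schurOp_single_apply]
  · exact (norm_schurOp_le hrow hcol).trans_eq (Real.coe_toNNReal _ (by positivity))
end
end
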